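/- arXiv:0904.3165 — 4 statements merged into one kernel-verified Lean document; each statement's English description precedes it below -/
import Mathlib

section
/- For a q-bit layered erasure channel with input X^q = (X_1,...,X_q) ∈ F_2^q, random state N independent of X^q with 0 ≤ N ≤ q, output X^N = (X_1,...,X_N), and any random variable V forming a Markov chain V — X^q — X^N: I(X^q; X^N | V) = H(X^N | V, N). -/
open Finset

attribute [local instance] Classical.propDecidable

/-- Probability of an event under a pmf `p` on a finite sample space. -/
noncomputable def pA {Ω : Type*} [Fintype Ω] (p : Ω → ℝ) (A : Ω → Prop) : ℝ :=
  ∑ ω : Ω, if A ω then p ω else 0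

/-- `p` is a probability mass function. -/
def IsPMF {Ω : Type*} [Fintype Ω] (p : Ω → ℝ) : Prop :=
  (∀ ω, 0 ≤ p ω) ∧ ∑ ω : Ω, p ω = 1

/-- Shannon entropy (base 2) of a random variable `X` under pmf `p`. -/
noncomputable def ent {Ω α : Type*} [Fintype Ω] [Fintype α] (p : Ω → ℝ) (X : Ω → α) : ℝ :=
  -∑ a : α, pA p (fun ω => X ω = a) * Real.logb 2 (pA p (fun ω => X ω = a))

/-- Conditional entropy `H(X|Y)`. -/
noncomputable def condEnt {Ω α β : Type*} [Fintype Ω] [Fintype α] [Fintype β]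
    (p : Ω → ℝ) (X : Ω → α) (Y : Ω → β) : ℝ :=
  ent p (fun ω => (X ω, Y ω)) - ent p Y

/-- Mutual information `I(X;Y)`. -/
noncomputable def mutInfo {Ω α β : Type*} [Fintype Ω] [Fintype α] [Fintype β]
    (p : Ω → ℝ) (X : Ω → α) (Y : Ω → β) : ℝ :=
  ent p X - condEnt p X Y

/-- Conditional mutual information `I(X;Y|V)`. -/
noncomputable def condMutInfo {Ω α β γ : Type*} [Fintype Ω] [Fintype α] [Fintype β] [Fintype γ]
    (p : Ω → ℝ) (X : Ω → α) (Y : Ω → β) (V : Ω → γ) : ℝ :=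
  condEnt p X V - condEnt p X (fun ω => (Y ω, V ω))

/-- Independence of two random variables under pmf `p`. -/
def Indep {Ω α β : Type*} [Fintype Ω] (p : Ω → ℝ) (X : Ω → α) (Y : Ω → β) : Prop :=
  ∀ a b, pA p (fun ω => X ω = a ∧ Y ω = b)
    = pA p (fun ω => X ω = a) * pA p (fun ω => Y ω = b)

/-! ### Auxiliary lemmas -/

lemma pA_congr {Ω : Type*} [Fintype Ω] (p : Ω → ℝ) {A B : Ω → Prop}
    (h : ∀ ω, A ω ↔ B ω) : pA p A = pA p B :=
  Finset.sum_congr rfl fun ω _ => if_congr (h ω) rfl rfl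

lemma sum_pA_eq_one {Ω α : Type*} [Fintype Ω] [Fintype α] {p : Ω → ℝ}
    (hp : IsPMF p) (A : Ω → α) : ∑ a : α, pA p (fun ω => A ω = a) = 1 := by
  unfold pA
  rw [Finset.sum_comm]
  calc ∑ ω : Ω, ∑ a : α, (if A ω = a then p ω else 0) = ∑ ω : Ω, p ω := by
        apply Finset.sum_congr rfl
        intro ω _
        simp
    _ = 1 := hp.2

/-- Entropy is invariant under a map which is injective on the values of `Z`. -/
lemma ent_comp {Ω α β : Type*} [Fintype Ω] [Fintype α] [Fintype β]
    (p : Ω → ℝ) (f : α → β) (g : β → α) (Z : Ω → α)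
    (h : ∀ ω, g (f (Z ω)) = Z ω) :
    ent p (fun ω => f (Z ω)) = ent p Z := by
  have key : ∀ a : α, g (f a) = a →
      pA p (fun ω => f (Z ω) = f a) = pA p (fun ω => Z ω = a) := by
    intro a hga
    apply pA_congr
    intro ω
    constructor
    · intro hf
      have := congrArg g hf
      rwa [h ω, hga] at this
    · intro hz; rw [hz]
  have exZ : ∀ a : α, pA p (fun ω => Z ω = a) ≠ 0 → g (f a) = a := by
    intro a ha
    obtain ⟨ω, hω⟩ := Finset.exists_ne_zero_of_sum_ne_zero ha
    have hza : Z ω = a := by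
      by_contra hc
      simp [hc] at hω
    rw [← hza]; exact h ω
  have exW : ∀ b : β, pA p (fun ω => f (Z ω) = b) ≠ 0 → f (g b) = b := by
    intro b hb
    obtain ⟨ω, hω⟩ := Finset.exists_ne_zero_of_sum_ne_zero hb
    have hzb : f (Z ω) = b := by
      by_contra hc
      simp [hc] at hω
    rw [← hzb, h ω]
  have keyW : ∀ b : β, pA p (fun ω => f (Z ω) = b) ≠ 0 →
      pA p (fun ω => f (Z ω) = b) = pA p (fun ω => Z ω = g b) := by
    intro b hb
    have hfg := exW b hb
    have hgg : g (f (g b)) = g b := congrArg g hfg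
    calc pA p (fun ω => f (Z ω) = b) = pA p (fun ω => f (Z ω) = f (g b)) := by rw [hfg]
      _ = pA p (fun ω => Z ω = g b) := key (g b) hgg
  unfold ent
  congr 1
  have lhs_eq : ∑ b : β, pA p (fun ω => f (Z ω) = b) * Real.logb 2 (pA p (fun ω => f (Z ω) = b))
      = ∑ b ∈ Finset.univ.filter (fun b => pA p (fun ω => f (Z ω) = b) ≠ 0),
          pA p (fun ω => f (Z ω) = b) * Real.logb 2 (pA p (fun ω => f (Z ω) = b)) := by
    symm
    apply Finset.sum_filter_of_ne
    intro b _ hterm h0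
    exact hterm (by rw [h0]; ring)
  have rhs_eq : ∑ a : α, pA p (fun ω => Z ω = a) * Real.logb 2 (pA p (fun ω => Z ω = a))
      = ∑ a ∈ Finset.univ.filter (fun a => pA p (fun ω => Z ω = a) ≠ 0),
          pA p (fun ω => Z ω = a) * Real.logb 2 (pA p (fun ω => Z ω = a)) := by
    symm
    apply Finset.sum_filter_of_ne
    intro a _ hterm h0
    exact hterm (by rw [h0]; ring)
  rw [lhs_eq, rhs_eq]
  apply Finset.sum_nbij' (i := fun b => g b) (j := fun a => f a)
  · intro b hb
    have hb' : pA p (fun ω => f (Z ω) = b) ≠ 0 := (Finset.mem_filter.mp hb).2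
    refine Finset.mem_filter.mpr ⟨Finset.mem_univ _, ?_⟩
    rw [← keyW b hb']
    exact hb'
  · intro a ha
    have ha' : pA p (fun ω => Z ω = a) ≠ 0 := (Finset.mem_filter.mp ha).2
    refine Finset.mem_filter.mpr ⟨Finset.mem_univ _, ?_⟩
    rw [key a (exZ a ha')]
    exact ha'
  · intro b hb
    exact exW b (Finset.mem_filter.mp hb).2
  · intro a ha
    exact exZ a (Finset.mem_filter.mp ha).2
  · intro b hb
    rw [← keyW b (Finset.mem_filter.mp hb).2]

/-- Joint entropy of independent random variables is the sum of the entropies. -/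
lemma ent_pair_of_indep {Ω α β : Type*} [Fintype Ω] [Fintype α] [Fintype β]
    {p : Ω → ℝ} (hp : IsPMF p) (A : Ω → α) (B : Ω → β) (hAB : Indep p A B) :
    ent p (fun ω => (A ω, B ω)) = ent p A + ent p B := by
  have hA1 : ∑ a : α, pA p (fun ω => A ω = a) = 1 := sum_pA_eq_one hp A
  have hB1 : ∑ b : β, pA p (fun ω => B ω = b) = 1 := sum_pA_eq_one hp B
  have step : ∀ a b, pA p (fun ω => (A ω, B ω) = (a, b))
      = pA p (fun ω => A ω = a) * pA p (fun ω => B ω = b) := by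
    intro a b
    rw [← hAB a b]
    exact pA_congr p fun ω => by simp [Prod.ext_iff]
  unfold ent
  rw [Fintype.sum_prod_type]
  have expand : ∀ a b,
      pA p (fun ω => (A ω, B ω) = (a, b)) * Real.logb 2 (pA p (fun ω => (A ω, B ω) = (a, b)))
      = pA p (fun ω => A ω = a) * pA p (fun ω => B ω = b) * Real.logb 2 (pA p (fun ω => A ω = a))
        + pA p (fun ω => A ω = a) * pA p (fun ω => B ω = b) * Real.logb 2 (pA p (fun ω => B ω = b)) := by
    intro a b
    rw [step a b]
    rcases eq_or_ne (pA p (fun ω => A ω = a)) 0 with h0 | h0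
    · simp [h0]
    rcases eq_or_ne (pA p (fun ω => B ω = b)) 0 with h1 | h1
    · simp [h1]
    rw [Real.logb_mul h0 h1]
    ring
  calc -∑ a : α, ∑ b : β,
        pA p (fun ω => (A ω, B ω) = (a, b)) * Real.logb 2 (pA p (fun ω => (A ω, B ω) = (a, b)))
      = -∑ a : α, ∑ b : β,
        (pA p (fun ω => A ω = a) * pA p (fun ω => B ω = b) * Real.logb 2 (pA p (fun ω => A ω = a))
          + pA p (fun ω => A ω = a) * pA p (fun ω => B ω = b) * Real.logb 2 (pA p (fun ω => B ω = b))) := by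
        congr 1
        exact Finset.sum_congr rfl fun a _ => Finset.sum_congr rfl fun b _ => expand a b
    _ = -((∑ a : α, pA p (fun ω => A ω = a) * Real.logb 2 (pA p (fun ω => A ω = a))) * (∑ b : β, pA p (fun ω => B ω = b))
        + (∑ a : α, pA p (fun ω => A ω = a)) * (∑ b : β, pA p (fun ω => B ω = b) * Real.logb 2 (pA p (fun ω => B ω = b)))) := by
        congr 1
        rw [Finset.sum_mul_sum, Finset.sum_mul_sum, ← Finset.sum_add_distrib]
        apply Finset.sum_congr rfl
        intro a _
        rw [← Finset.sum_add_distrib]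
        apply Finset.sum_congr rfl
        intro b _
        ring
    _ = _ := by rw [hA1, hB1]; ring

lemma card_filter_val_lt {q m : ℕ} (h : m ≤ q) :
    ((univ : Finset (Fin q)).filter fun i : Fin q => (i : ℕ) < m).card = m := by
  conv_rhs => rw [← Finset.card_range m]
  apply Finset.card_bij' (fun (a : Fin q) _ => (a : ℕ))
    (fun b hb => (⟨b, lt_of_lt_of_le (Finset.mem_range.mp hb) h⟩ : Fin q))
  case hi => intro a ha; exact Finset.mem_range.mpr ((Finset.mem_filter.mp ha).2)
  case hj => intro b hb; simp [Finset.mem_range.mp hb]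
  case left_inv => intro a ha; simp
  case right_inv => intro b hb; simp

/-- Marginal independence. -/
lemma indep_fst {Ω α β γ : Type*} [Fintype Ω] [Fintype α] [Fintype β] [Fintype γ]
    {p : Ω → ℝ} {N : Ω → α} {V : Ω → β} {X : Ω → γ}
    (h : Indep p N (fun ω => (V ω, X ω))) : Indep p N V := by
  intro n v
  have h1 : pA p (fun ω => N ω = n ∧ V ω = v)
      = ∑ x : γ, pA p (fun ω => N ω = n ∧ (V ω, X ω) = (v, x)) := by
    unfold pA
    rw [Finset.sum_comm]
    apply Finset.sum_congr rfl
    intro ω _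
    by_cases h1 : N ω = n <;> by_cases h2 : V ω = v <;> simp [h1, h2, Prod.ext_iff]
  have h3 : ∑ x : γ, pA p (fun ω => (V ω, X ω) = (v, x)) = pA p (fun ω => V ω = v) := by
    unfold pA
    rw [Finset.sum_comm]
    apply Finset.sum_congr rfl
    intro ω _
    by_cases h2 : V ω = v <;> simp [h2, Prod.ext_iff]
  rw [h1, Finset.sum_congr rfl (fun x _ => h n (v, x)), ← Finset.mul_sum, h3]

/-- For a `q`-bit layered erasure channel with input `X`, state `N`
independent of `(V, X)`, and output `Y = X^N` (the first `N` bits of `X`),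
one has `I(X; X^N | V) = H(X^N | V, N)`. -/
theorem condMutInfo_eq_condEnt_layered_erasure
    {Ω 𝒱 : Type*} [Fintype Ω] [Fintype 𝒱] {q : ℕ}
    (p : Ω → ℝ) (hp : IsPMF p)
    (X : Ω → Fin q → Bool) (N : Ω → Fin (q+1)) (V : Ω → 𝒱)
    (hind : Indep p N (fun ω => (V ω, X ω)))
    (Y : Ω → Fin q → Option Bool)
    (hY : ∀ ω i, Y ω i = if (i : ℕ) < (N ω : ℕ) then some (X ω i) else none) :
    condMutInfo p X Y V = condEnt p Y (fun ω => (V ω, N ω)) := by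
  classical
  set φ : (Fin q → Bool) → Fin (q+1) → (Fin q → Option Bool) :=
    fun x n i => if (i : ℕ) < (n : ℕ) then some (x i) else none with hφ
  have hcard : ∀ y : Fin q → Option Bool,
      ((univ : Finset (Fin q)).filter fun i : Fin q => (y i).isSome).card < q + 1 := by
    intro y
    have := Finset.card_filter_le (univ : Finset (Fin q)) (fun i : Fin q => (y i).isSome)
    simp only [Finset.card_univ, Fintype.card_fin] at this
    omega
  set ψ : (Fin q → Option Bool) → Fin (q+1) :=
    fun y => ⟨((univ : Finset (Fin q)).filter fun i : Fin q => (y i).isSome).card, hcard y⟩ with hψ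
  have ψφ : ∀ x n, ψ (φ x n) = n := by
    intro x n
    apply Fin.ext
    show ((univ : Finset (Fin q)).filter fun i : Fin q => ((φ x n) i).isSome).card = (n : ℕ)
    have hfe : ((univ : Finset (Fin q)).filter fun i : Fin q => ((φ x n) i).isSome)
        = (univ : Finset (Fin q)).filter fun i : Fin q => (i : ℕ) < (n : ℕ) := by
      apply Finset.filter_congr
      intro i _
      by_cases hi : (i : ℕ) < (n : ℕ) <;> simp [hφ, hi]
    rw [hfe, card_filter_val_lt (Nat.lt_succ_iff.mp n.isLt)]
  have hYfun : ∀ ω, Y ω = φ (X ω) (N ω) := fun ω => funext fun i => hY ω i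
  -- e1 : H(X,(Y,V)) = H(N,(V,X))
  have e1 : ent p (fun ω => (X ω, (Y ω, V ω))) = ent p (fun ω => (N ω, (V ω, X ω))) := by
    have heq : (fun ω => (X ω, (Y ω, V ω)))
        = fun ω => (fun z : Fin (q+1) × (𝒱 × (Fin q → Bool)) => (z.2.2, (φ z.2.2 z.1, z.2.1)))
            ((fun ω => (N ω, (V ω, X ω))) ω) := by
      funext ω
      simp [hYfun ω]
    rw [heq]
    apply ent_comp p (Z := fun ω => (N ω, (V ω, X ω)))
      (f := fun z : Fin (q+1) × (𝒱 × (Fin q → Bool)) => (z.2.2, (φ z.2.2 z.1, z.2.1)))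
      (g := fun w : (Fin q → Bool) × ((Fin q → Option Bool) × 𝒱) => (ψ w.2.1, (w.2.2, w.1)))
    intro ω
    simp [ψφ]
  -- e2 : H(X,V) = H(V,X)
  have e2 : ent p (fun ω => (X ω, V ω)) = ent p (fun ω => (V ω, X ω)) := by
    have heq : (fun ω => (X ω, V ω))
        = fun ω => Prod.swap ((fun ω => (V ω, X ω)) ω) := rfl
    rw [heq]
    apply ent_comp p Prod.swap Prod.swap
    intro ω
    rfl
  -- e3 : H(Y,V) = H(Y,(V,N))
  have e3 : ent p (fun ω => (Y ω, V ω)) = ent p (fun ω => (Y ω, (V ω, N ω))) := by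
    have heq : (fun ω => (Y ω, V ω))
        = fun ω => (fun z : (Fin q → Option Bool) × (𝒱 × Fin (q+1)) => (z.1, z.2.1))
            ((fun ω => (Y ω, (V ω, N ω))) ω) := rfl
    rw [heq]
    apply ent_comp p (Z := fun ω => (Y ω, (V ω, N ω)))
      (f := fun z : (Fin q → Option Bool) × (𝒱 × Fin (q+1)) => (z.1, z.2.1))
      (g := fun w : (Fin q → Option Bool) × 𝒱 => (w.1, (w.2, ψ w.1)))
    intro ω
    simp [hYfun ω, ψφ]
  -- e4 : H(V,N) = H(N,V)
  have e4 : ent p (fun ω => (V ω, N ω)) = ent p (fun ω => (N ω, V ω)) := by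
    have heq : (fun ω => (V ω, N ω))
        = fun ω => Prod.swap ((fun ω => (N ω, V ω)) ω) := rfl
    rw [heq]
    apply ent_comp p Prod.swap Prod.swap
    intro ω
    rfl
  have e5 : ent p (fun ω => (N ω, (V ω, X ω))) = ent p N + ent p (fun ω => (V ω, X ω)) :=
    ent_pair_of_indep hp N (fun ω => (V ω, X ω)) hind
  have e6 : ent p (fun ω => (N ω, V ω)) = ent p N + ent p V :=
    ent_pair_of_indep hp N V (indep_fst hind)
  unfold condMutInfo condEnt
  rw [e1, e5, e2, e4, e6, e3]
  ring
end

section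
/- If N_1 is stochastically larger than N_2 (i.e., P(N_1 ≥ x) ≥ P(N_2 ≥ x) for all x ≥ 0), then there exists a Markov chain X^q — X^{N_1} — Y such that Y has the same conditional distribution given X^q as X^{N_2}; i.e., the q-bit layered erasure broadcast channel (N_1, N_2) is degraded. -/
/-!
Stochastic dominance yields the quantile coupling of `N₁` and `N₂`, under which `N₂ ≤ N₁`
almost surely; conditioning on `N₁` turns it into a lower-triangular stochastic matrix `w`.
Receiver 1's output `X^{N₁}` reveals `N₁` as its number of unerased bits, so receiver 1 can
draw `m` from `w N₁ ·` and erase every bit after the first `m`: the result has the law of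
`X^{N₂}` given `X^q`.
-/

open Finset

attribute [local instance] Classical.propDecidable

/-- The output of a layered erasure channel in state `n`: first `n` bits of `x`. -/
def trunc {q : ℕ} (x : Fin q → Bool) (n : Fin (q+1)) : Fin q → Option Bool :=
  fun i => if (i : ℕ) < (n : ℕ) then some (x i) else none

/-- Length of `[a, b] ∩ [c, d]`. -/
def intervalOverlap (a b c d : ℝ) : ℝ := max 0 (min b d - max a c)

lemma intervalOverlap_nonneg (a b c d : ℝ) : 0 ≤ intervalOverlap a b c d := le_max_left _ _

lemma intervalOverlap_comm (a b c d : ℝ) : intervalOverlap a b c d = intervalOverlap c d a b := by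
  rw [intervalOverlap, intervalOverlap, min_comm, max_comm a]

lemma intervalOverlap_eq_zero_of_le {a b c d : ℝ} (h : b ≤ c) : intervalOverlap a b c d = 0 :=
  max_eq_left <| sub_nonpos.mpr <| (min_le_left _ _).trans <| h.trans (le_max_right _ _)

lemma intervalOverlap_eq_sub {a b c d : ℝ} (hab : a ≤ b) (hcd : c ≤ d) :
    intervalOverlap a b c d = max 0 (min b d - a) - max 0 (min b c - a) := by
  simp only [intervalOverlap, min_def, max_def]
  split_ifs <;> linarith

/-- The intervals `[G j, G (j + 1)]` tile `[G 0, G n]`, so they cut `[a, b]` into pieces of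
total length `b - a`. -/
lemma sum_intervalOverlap_of_monotone {G : ℕ → ℝ} (hG : Monotone G) {n : ℕ} {a b : ℝ}
    (h0a : G 0 ≤ a) (hab : a ≤ b) (hbn : b ≤ G n) :
    ∑ j : Fin n, intervalOverlap a b (G j) (G (j + 1)) = b - a := by
  let E k := max 0 (min b (G k) - a)
  have hE0 : E 0 = 0 := max_eq_left <| sub_nonpos.mpr <| (min_le_right _ _).trans h0a
  have hEn : E n = b - a := by simp only [E, min_eq_left hbn, max_eq_right (sub_nonneg.mpr hab)]
  rw [Fin.sum_univ_eq_sum_range (fun j => intervalOverlap a b (G j) (G (j + 1))),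
    sum_congr rfl fun j _ => intervalOverlap_eq_sub hab (hG j.le_succ), sum_range_sub (f := E),
    hE0, hEn, sub_zero]

section CumSum

variable {n : ℕ}

noncomputable def cumSum (f : Fin n → ℝ) (k : ℕ) : ℝ :=
  ∑ i ∈ univ.filter (fun i : Fin n => (i : ℕ) < k), f i

lemma cumSum_zero (f : Fin n → ℝ) : cumSum f 0 = 0 := by
  simp [cumSum]

lemma cumSum_succ (f : Fin n → ℝ) (i : Fin n) : cumSum f (i + 1) = cumSum f i + f i := by
  have : univ.filter (fun j : Fin n => (j : ℕ) < i + 1)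
      = insert i (univ.filter fun j : Fin n => (j : ℕ) < i) := by
    ext j; simp only [mem_filter, mem_univ, true_and, mem_insert, Fin.ext_iff]; omega
  rw [cumSum, this, sum_insert (by simp), add_comm, cumSum]

lemma cumSum_of_le (f : Fin n → ℝ) {k : ℕ} (hk : n ≤ k) : cumSum f k = ∑ i, f i := by
  rw [cumSum, filter_true_of_mem fun i _ => i.isLt.trans_le hk]

lemma cumSum_mono {f : Fin n → ℝ} (hf : ∀ i, 0 ≤ f i) : Monotone (cumSum f) :=
  fun _ _ hkl => sum_le_sum_of_subset_of_nonneg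
    (fun j => by simp only [mem_filter, mem_univ, true_and]; omega) fun i _ _ => hf i

lemma cumSum_add_sum_le (f : Fin n → ℝ) (i : Fin n) :
    cumSum f i + ∑ m with i ≤ m, f m = ∑ m, f m := by
  rw [← sum_filter_add_sum_filter_not univ (fun m => i ≤ m), add_comm, cumSum]
  congr 2
  ext m; simp only [mem_filter, mem_univ, true_and, Fin.le_def]; omega

lemma cumSum_le_cumSum_of_tail_le {f g : Fin n → ℝ} (htot : ∑ i, f i = ∑ i, g i)
    (htail : ∀ i : Fin n, ∑ m with i ≤ m, g m ≤ ∑ m with i ≤ m, f m) (k : ℕ) :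
    cumSum f k ≤ cumSum g k := by
  rcases lt_or_ge k n with hk | hk
  · have hf := cumSum_add_sum_le f ⟨k, hk⟩
    have hg := cumSum_add_sum_le g ⟨k, hk⟩
    have := htail ⟨k, hk⟩
    simp only at hf hg
    linarith
  · rw [cumSum_of_le f hk, cumSum_of_le g hk, htot]

end CumSum

section Coupling

variable {n : ℕ} {f g : Fin n → ℝ}

/-- With `F = cumSum f` and `G = cumSum g`, this is the probability that one uniform variable
on `[0, ∑ f]` is sent to `i` by the quantile function of `f` and to `j` by that of `g`. -/
noncomputable def quantileCoupling (f g : Fin n → ℝ) (i j : Fin n) : ℝ :=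
  intervalOverlap (cumSum f i) (cumSum f (i + 1)) (cumSum g j) (cumSum g (j + 1))

lemma quantileCoupling_comm (f g : Fin n → ℝ) (i j : Fin n) :
    quantileCoupling f g i j = quantileCoupling g f j i :=
  intervalOverlap_comm ..

lemma sum_quantileCoupling_right (hf : ∀ i, 0 ≤ f i) (hg : ∀ j, 0 ≤ g j)
    (htot : ∑ i, f i = ∑ j, g j) (i : Fin n) : ∑ j, quantileCoupling f g i j = f i := by
  simp only [quantileCoupling]
  rw [sum_intervalOverlap_of_monotone (cumSum_mono hg), cumSum_succ, add_sub_cancel_left]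
  · calc cumSum g 0 = cumSum f 0 := by rw [cumSum_zero, cumSum_zero]
      _ ≤ cumSum f i := cumSum_mono hf (Nat.zero_le _)
  · exact cumSum_mono hf (Nat.le_succ _)
  · calc cumSum f (i + 1) ≤ cumSum f n := cumSum_mono hf i.isLt
      _ = cumSum g n := by rw [cumSum_of_le f le_rfl, cumSum_of_le g le_rfl, htot]

lemma quantileCoupling_eq_zero_of_lt (hf : ∀ i, 0 ≤ f i)
    (hle : ∀ k, cumSum f k ≤ cumSum g k) {i j : Fin n} (hij : i < j) :
    quantileCoupling f g i j = 0 :=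
  intervalOverlap_eq_zero_of_le <|
    calc cumSum f (i + 1) ≤ cumSum f j := cumSum_mono hf (Fin.lt_def.mp hij)
      _ ≤ cumSum g j := hle j

theorem exists_coupling_of_cumSum_le (hf : ∀ i, 0 ≤ f i) (hg : ∀ j, 0 ≤ g j)
    (htot : ∑ i, f i = ∑ j, g j) (hle : ∀ k, cumSum f k ≤ cumSum g k) :
    ∃ π : Fin n → Fin n → ℝ, (∀ i j, 0 ≤ π i j) ∧ (∀ i, ∑ j, π i j = f i) ∧
      (∀ j, ∑ i, π i j = g j) ∧ ∀ i j, i < j → π i j = 0 :=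
  ⟨quantileCoupling f g, fun _ _ => intervalOverlap_nonneg ..,
    sum_quantileCoupling_right hf hg htot, fun j => by
      simpa only [quantileCoupling_comm f g] using sum_quantileCoupling_right hg hf htot.symm j,
    fun _ _ => quantileCoupling_eq_zero_of_lt hf hle⟩

end Coupling

/-- Normalise the rows of `π`; a zero row is replaced by the corresponding row of the identity. -/
lemma exists_stochastic_mul_eq {α : Type*} [Fintype α] (π : α → α → ℝ)
    (hπ : ∀ a b, 0 ≤ π a b) :
    ∃ w : α → α → ℝ, (∀ a b, 0 ≤ w a b) ∧ (∀ a, ∑ b, w a b = 1) ∧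
      (∀ a b, (∑ c, π a c) * w a b = π a b) ∧
      ∀ a b, b ≠ a → π a b = 0 → w a b = 0 := by
  refine ⟨fun a b => if ∑ c, π a c = 0 then (if b = a then 1 else 0)
      else π a b / ∑ c, π a c,
    fun a b => ?_, fun a => ?_, fun a b => ?_, fun a b hba hab => ?_⟩ <;>
    by_cases h : ∑ c, π a c = 0 <;> simp only [h, if_true, if_false]
  · positivity
  · exact div_nonneg (hπ a b) (sum_nonneg fun c _ => hπ a c)
  · simp
  · rw [← sum_div, div_self h]
  · rw [zero_mul, ((sum_eq_zero_iff_of_nonneg fun c _ => hπ a c).mp h b (mem_univ b))]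
  · exact mul_div_cancel₀ _ h
  · simp [hba]
  · simp [hab]

theorem exists_stochastic_lowerTriangular_of_cumSum_le {n : ℕ} {f g : Fin n → ℝ}
    (hf : ∀ i, 0 ≤ f i) (hg : ∀ j, 0 ≤ g j) (htot : ∑ i, f i = ∑ j, g j)
    (hle : ∀ k, cumSum f k ≤ cumSum g k) :
    ∃ w : Fin n → Fin n → ℝ, (∀ i j, 0 ≤ w i j) ∧ (∀ i, ∑ j, w i j = 1) ∧
      (∀ j, ∑ i, f i * w i j = g j) ∧ ∀ i j, i < j → w i j = 0 := by
  obtain ⟨π, hπ0, hrow, hcol, hπlt⟩ := exists_coupling_of_cumSum_le hf hg htot hle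
  obtain ⟨w, hw0, hw1, hwπ, hwsupp⟩ := exists_stochastic_mul_eq π hπ0
  simp only [hrow] at hwπ
  exact ⟨w, hw0, hw1, fun j => by simp only [hwπ, hcol],
    fun i j hij => hwsupp i j hij.ne' (hπlt i j hij)⟩

lemma sum_mixture_mul {ι Y : Type*} [Fintype ι] [Fintype Y] [DecidableEq Y] (φ : ι → Y)
    (f : ι → ℝ) (h : Y → ℝ) :
    ∑ y, (∑ n, if φ n = y then f n else 0) * h y = ∑ n, f n * h (φ n) := by
  simp_rw [sum_mul, ite_mul, zero_mul]
  rw [sum_comm]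
  simp

/-- The kernel reads the state `n = level y` off the output `y`, draws `m` from `w n ·`, and
lowers the output to state `m`. -/
theorem exists_kernel_of_nested {ι X Y : Type*} [Fintype ι] [LinearOrder ι] [Fintype Y]
    [DecidableEq Y] (φ : X → ι → Y) (level : Y → ι) (restrict : Y → ι → Y)
    (hlevel : ∀ x n, level (φ x n) = n)
    (hrestrict : ∀ x {n m}, m ≤ n → restrict (φ x n) m = φ x m)
    {f g : ι → ℝ} (w : ι → ι → ℝ) (hw0 : ∀ n m, 0 ≤ w n m)
    (hw1 : ∀ n, ∑ m, w n m = 1)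
    (hwf : ∀ m, ∑ n, f n * w n m = g m) (hwlt : ∀ n m, n < m → w n m = 0) :
    ∃ K : Y → Y → ℝ, (∀ y z, 0 ≤ K y z) ∧ (∀ y, ∑ z, K y z = 1) ∧
      ∀ x z, (∑ n, if φ x n = z then g n else 0)
        = ∑ y, (∑ n, if φ x n = y then f n else 0) * K y z := by
  refine ⟨fun y z => ∑ m, w (level y) m * if restrict y m = z then 1 else 0,
    fun y z => sum_nonneg fun m _ => mul_nonneg (hw0 _ _) (by split_ifs <;> norm_num),
    fun y => ?_, fun x z => ?_⟩
  · rw [sum_comm]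
    simp [hw1]
  · rw [sum_mixture_mul]
    calc (∑ m, if φ x m = z then g m else 0)
        = ∑ m, (∑ n, f n * w n m) * if φ x m = z then 1 else 0 := by simp [hwf]
      _ = ∑ n, ∑ m, f n * (w n m * if restrict (φ x n) m = z then 1 else 0) := by
        simp_rw [sum_mul]
        rw [sum_comm]
        refine sum_congr rfl fun n _ => sum_congr rfl fun m _ => ?_
        rcases lt_or_ge n m with h | h
        · simp [hwlt n m h]
        · rw [hrestrict x h, mul_assoc]
      _ = ∑ n, f n * ∑ m, w (level (φ x n)) m * if restrict (φ x n) m = z then 1 else 0 := by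
        simp_rw [hlevel, mul_sum]

section LayeredErasure

variable {q : ℕ}

noncomputable def erasureLevel (y : Fin q → Option Bool) : Fin (q + 1) :=
  ⟨(univ.filter fun i => (y i).isSome).card,
    Nat.lt_succ_of_le ((card_filter_le _ _).trans_eq (card_fin q))⟩

def eraseFrom (y : Fin q → Option Bool) (m : Fin (q + 1)) : Fin q → Option Bool :=
  fun i => if (i : ℕ) < m then y i else none

lemma erasureLevel_trunc (x : Fin q → Bool) (n : Fin (q + 1)) : erasureLevel (trunc x n) = n := by
  ext
  have : (univ.filter fun i => (trunc x n i).isSome)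
      = univ.filter fun i : Fin q => (i : ℕ) < n := by
    ext i; by_cases h : (i : ℕ) < n <;> simp [trunc, h]
  simp only [erasureLevel, this, Fin.card_filter_val_lt]
  omega

lemma eraseFrom_trunc (x : Fin q → Bool) {n m : Fin (q + 1)} (hmn : m ≤ n) :
    eraseFrom (trunc x n) m = trunc x m := by
  ext i : 1
  by_cases h : (i : ℕ) < m
  · simp [eraseFrom, trunc, h, h.trans_le hmn]
  · simp [eraseFrom, trunc, h]

end LayeredErasure

/-- If `N₁` is stochastically larger than `N₂`, then the `q`-bit layered
erasure broadcast channel `(N₁, N₂)` is degraded: there exists a stochastic kernel `K`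
(a Markov chain `X^q — X^{N₁} — Y`) such that composing the channel to receiver 1 with
`K` yields exactly the conditional distribution of `X^{N₂}` given `X^q`. -/
theorem layered_erasure_degraded {q : ℕ} (f1 f2 : Fin (q+1) → ℝ)
    (hf1 : (∀ n, 0 ≤ f1 n) ∧ ∑ n, f1 n = 1)
    (hf2 : (∀ n, 0 ≤ f2 n) ∧ ∑ n, f2 n = 1)
    (hdom : ∀ n : Fin (q+1),
      ∑ m ∈ univ.filter (fun m => n ≤ m), f2 m ≤ ∑ m ∈ univ.filter (fun m => n ≤ m), f1 m) :
    ∃ K : (Fin q → Option Bool) → (Fin q → Option Bool) → ℝ,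
      (∀ y z, 0 ≤ K y z) ∧ (∀ y, ∑ z, K y z = 1) ∧
      ∀ (x : Fin q → Bool) (z : Fin q → Option Bool),
        (∑ n, if trunc x n = z then f2 n else 0)
          = ∑ y, (∑ n, if trunc x n = y then f1 n else 0) * K y z := by
  have htot : ∑ n, f1 n = ∑ n, f2 n := hf1.2.trans hf2.2.symm
  obtain ⟨w, hw0, hw1, hwf, hwlt⟩ := exists_stochastic_lowerTriangular_of_cumSum_le hf1.1 hf2.1
    htot (cumSum_le_cumSum_of_tail_le htot hdom)
  exact exists_kernel_of_nested trunc erasureLevel eraseFrom erasureLevel_trunc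
    (fun x _ _ => eraseFrom_trunc x) w hw0 hw1 hwf hwlt
end

section
/- Truncation property of the antipodal expansion: for m ≥ 1, let 𝒳 = { Σ_{n=1}^m x_n 2^{-n} : x_n ∈ {−1,1} }. For any y ∈ [−1,1] with antipodal expansion y = Σ_{n=1}^∞ y_n 2^{-n} (y_n ∈ {−1,1} defined by y_1 = sgn(y), y_{n+1} = sgn(y − Σ_{j≤n} y_j 2^{-j})), the point of 𝒳 closest to y (in absolute value) is x̂ = Σ_{n=1}^m y_n 2^{-n}. -/
/-- `sgn(x) = -1` for `x < 0` and `1` for `x ≥ 0`. -/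
noncomputable def sgn (x : ℝ) : ℝ := if x < 0 then -1 else 1

/-- Partial sums of the antipodal expansion of `a`:
`partialA a n = ∑_{j=1}^n a_j 2^{-j}` where `a_{j+1} = sgn(a − partialA a j)`. -/
noncomputable def partialA (a : ℝ) : ℕ → ℝ
  | 0 => 0
  | n + 1 => partialA a n + sgn (a - partialA a n) * (2 : ℝ) ^ (-((n : ℤ) + 1))

lemma sgn_cases (x : ℝ) : sgn x = -1 ∨ sgn x = 1 := by
  unfold sgn; split <;> simp

lemma w_pos (n : ℤ) : (0:ℝ) < (2:ℝ) ^ n := zpow_pos (by norm_num) n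

lemma w_succ (n : ℕ) : (2:ℝ) ^ (-((n:ℤ) + 1 + 1)) = (2:ℝ) ^ (-((n:ℤ) + 1)) / 2 := by
  rw [show -((n:ℤ) + 1 + 1) = -((n:ℤ)+1) + (-1) by ring, zpow_add₀ (by norm_num : (2:ℝ) ≠ 0)]
  norm_num; ring

lemma err_succ (n : ℕ) : (2:ℝ) ^ (-((n:ℤ) + 1)) = (2:ℝ) ^ (-(n:ℤ)) / 2 := by
  rw [show -((n:ℤ) + 1) = -(n:ℤ) + (-1) by ring, zpow_add₀ (by norm_num : (2:ℝ) ≠ 0)]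
  norm_num; ring

/-- error bound -/
lemma err_bound (a : ℝ) (ha : |a| ≤ 1) (n : ℕ) :
    |a - partialA a n| ≤ (2:ℝ) ^ (-(n:ℤ)) := by
  induction n with
  | zero => simpa [partialA] using ha
  | succ n ih =>
    have hw := w_pos (-(n:ℤ))
    rw [show -((n+1:ℕ):ℤ) = -((n:ℤ)+1) by push_cast; ring]
    rw [partialA, err_succ n]
    rcases abs_le.mp ih with ⟨h1, h2'⟩
    unfold sgn
    split_ifs with h
    · rw [abs_le]; constructor <;> linarith
    · push_neg at h
      rw [abs_le]; constructor <;> linarith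

/-- partialA m as a sum over Fin m -/
lemma partialA_eq_sum (a : ℝ) (m : ℕ) :
    partialA a m = ∑ n : Fin m, sgn (a - partialA a n) * (2:ℝ) ^ (-((n:ℤ)+1)) := by
  induction m with
  | zero => simp [partialA]
  | succ m ih =>
    rw [Fin.sum_univ_castSucc]
    simp only [Fin.coe_castSucc, Fin.val_last]
    rw [← ih, partialA]

/-- geometric sum -/
lemma geom_sum_w (m : ℕ) : ∑ n : Fin m, (2:ℝ)^(-((n:ℤ)+1)) = 1 - (2:ℝ)^(-(m:ℤ)) := by
  induction m with
  | zero => simp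
  | succ m ih =>
    rw [Fin.sum_univ_castSucc]
    simp only [Fin.coe_castSucc, Fin.val_last]
    rw [ih, show -(((m+1:ℕ)):ℤ) = -((m:ℤ)+1) by push_cast; ring, err_succ]
    ring

/-- bound on constellation points -/
lemma sum_bound (m : ℕ) (x : Fin m → ℝ) (hx : ∀ n, x n = -1 ∨ x n = 1) :
    |∑ n : Fin m, x n * (2:ℝ) ^ (-((n:ℤ)+1))| ≤ 1 - (2:ℝ) ^ (-(m:ℤ)) := by
  calc |∑ n : Fin m, x n * (2:ℝ) ^ (-((n:ℤ)+1))|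
      ≤ ∑ n : Fin m, |x n * (2:ℝ) ^ (-((n:ℤ)+1))| := Finset.abs_sum_le_sum_abs _ _
    _ = ∑ n : Fin m, (2:ℝ) ^ (-((n:ℤ)+1)) := by
        apply Finset.sum_congr rfl
        intro n _
        rw [abs_mul, abs_of_pos (w_pos _)]
        rcases hx n with h | h <;> simp [h]
    _ = 1 - (2:ℝ) ^ (-(m:ℤ)) := geom_sum_w m

/-- shift lemma -/
lemma partialA_shift (a : ℝ) (n : ℕ) :
    partialA a (n+1) = (sgn a + partialA (2*a - sgn a) n) / 2 := by
  induction n with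
  | zero =>
    simp [partialA]
    ring
  | succ n ih =>
    have hsgn : ∀ t : ℝ, sgn (t / 2) = sgn t := by
      intro t; unfold sgn
      rcases lt_or_ge t 0 with h | h
      · rw [if_pos h, if_pos (by linarith)]
      · rw [if_neg (by linarith), if_neg (by linarith)]
    rw [show n+1+1 = (n+1)+1 from rfl, partialA, ih, partialA]
    have heq : a - (sgn a + partialA (2*a - sgn a) n) / 2
        = (2*a - sgn a - partialA (2*a - sgn a) n) / 2 := by ring
    rw [heq, hsgn]
    rw [show ((n+1:ℕ):ℤ) = (n:ℤ)+1 by push_cast; ring, w_succ]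
    ring

lemma main_aux (m : ℕ) : ∀ y : ℝ, |y| ≤ 1 → ∀ x : Fin m → ℝ, (∀ n, x n = -1 ∨ x n = 1) →
    |y - partialA y m| ≤ |y - ∑ n : Fin m, x n * (2:ℝ)^(-((n:ℤ)+1))| := by
  induction m with
  | zero => intro y _ x _; simp [partialA]
  | succ m ih =>
    intro y hy x hx
    rcases abs_le.mp hy with ⟨hy1, hy2⟩
    have hb : |2*y - sgn y| ≤ 1 := by
      unfold sgn
      split_ifs with h <;> (rw [abs_le]; constructor <;> linarith)
    have hA : y - partialA y (m+1) = ((2*y - sgn y) - partialA (2*y - sgn y) m) / 2 := by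
      rw [partialA_shift]; ring
    have hx' : ∀ n : Fin m, x n.succ = -1 ∨ x n.succ = 1 := fun n => hx n.succ
    set S := ∑ n : Fin m, x n.succ * (2:ℝ)^(-((n:ℤ)+1)) with hS
    have hsplit : ∑ n : Fin (m+1), x n * (2:ℝ)^(-((n:ℤ)+1)) = x 0 / 2 + S / 2 := by
      rw [Fin.sum_univ_succ, hS, Finset.sum_div]
      congr 1
      · norm_num
        ring
      · apply Finset.sum_congr rfl
        intro n _
        rw [Fin.val_succ]
        rw [show ((n.val+1:ℕ):ℤ) = (n.val:ℤ)+1 by push_cast; ring, w_succ]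
        ring
    have hih : |(2*y - sgn y) - partialA (2*y - sgn y) m| ≤ |(2*y - sgn y) - S| := by
      simpa [hS] using ih (2*y - sgn y) hb (fun n => x n.succ) hx'
    have herr : |(2*y - sgn y) - partialA (2*y - sgn y) m| ≤ (2:ℝ)^(-(m:ℤ)) :=
      err_bound _ hb m
    have hSb : |S| ≤ 1 - (2:ℝ)^(-(m:ℤ)) := by
      simpa [hS] using sum_bound m (fun n => x n.succ) hx'
    rcases abs_le.mp hSb with ⟨hS1, hS2⟩
    have hwm := w_pos (-(m:ℤ))
    rw [hA, hsplit, abs_div, abs_two]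
    rcases hx 0 with hx0 | hx0 <;> rcases sgn_cases y with hsv | hsv
    · -- x0 = -1, sgn y = -1 : same
      have heq : y - (x 0 / 2 + S / 2) = ((2*y - sgn y) - S)/2 := by
        rw [hx0, hsv]; ring
      rw [heq, abs_div, abs_two]
      linarith
    · -- x0 = -1, sgn y = 1 : opposite, y ≥ 0
      have hy0 : 0 ≤ y := by
        by_contra h; push_neg at h
        unfold sgn at hsv; rw [if_pos h] at hsv; norm_num at hsv
      have hE : (2:ℝ)^(-(m:ℤ))/2 ≤ y - (x 0 / 2 + S / 2) := by
        rw [hx0]; linarith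
      calc |(2*y - sgn y) - partialA (2*y - sgn y) m| / 2 ≤ (2:ℝ)^(-(m:ℤ))/2 := by linarith
        _ ≤ y - (x 0 / 2 + S / 2) := hE
        _ ≤ |y - (x 0 / 2 + S / 2)| := le_abs_self _
    · -- x0 = 1, sgn y = -1 : opposite, y < 0
      have hy0 : y < 0 := by
        by_contra h; push_neg at h
        unfold sgn at hsv; rw [if_neg (not_lt.mpr h)] at hsv; norm_num at hsv
      have hE : (2:ℝ)^(-(m:ℤ))/2 ≤ -(y - (x 0 / 2 + S / 2)) := by
        rw [hx0]; linarith
      calc |(2*y - sgn y) - partialA (2*y - sgn y) m| / 2 ≤ (2:ℝ)^(-(m:ℤ))/2 := by linarith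
        _ ≤ -(y - (x 0 / 2 + S / 2)) := hE
        _ ≤ |y - (x 0 / 2 + S / 2)| := neg_le_abs _
    · -- x0 = 1, sgn y = 1 : same
      have heq : y - (x 0 / 2 + S / 2) = ((2*y - sgn y) - S)/2 := by
        rw [hx0, hsv]; ring
      rw [heq, abs_div, abs_two]
      linarith

/-- **truncation property.** For `m ≥ 1` and `y ∈ [−1,1]`, the truncation
`x̂ = ∑_{n=1}^m y_n 2^{-n}` of the antipodal expansion of `y` is a point of the `m`-bit
antipodal constellation, and it is closest to `y` among all constellation points. -/
theorem antipodal_truncation_closest (m : ℕ) (hm : 1 ≤ m)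
    (y : ℝ) (hy : y ∈ Set.Icc (-1 : ℝ) 1) :
    (∃ c : Fin m → ℝ, (∀ n, c n = -1 ∨ c n = 1) ∧
        partialA y m = ∑ n : Fin m, c n * (2 : ℝ) ^ (-((n : ℤ) + 1))) ∧
    ∀ x : Fin m → ℝ, (∀ n, x n = -1 ∨ x n = 1) →
      |y - partialA y m| ≤ |y - ∑ n : Fin m, x n * (2 : ℝ) ^ (-((n : ℤ) + 1))| := by
  refine ⟨⟨fun n => sgn (y - partialA y n), fun n => sgn_cases _, partialA_eq_sum y m⟩, ?_⟩
  intro x hx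
  exact main_aux m y (abs_le.mpr ⟨hy.1, hy.2⟩) x hx
end

section
/- For the intermittent AWGN broadcast channel with complementary CDFs P(S_i ≥ s) = p_i for 0 ≤ s ≤ s_i* and 0 for s > s_i* (with s_2* ≤ s_1*, p_2 ≥ p_1, ρ = p_1/p_2), the state partition I_1(ω) = {s ≥ 0 : P(S_1 ≥ s) > ω·P(S_2 ≥ s)} equals [0, s_1*] if 0 ≤ ω < ρ and equals (s_2*, s_1*] if ω ≥ ρ, and correspondingly the outer bound rate R_1*(ω) = log e·∫_{I_1(ω)} P(S_1 ≥ s)/(1+s) ds equals C_1 = p_1 log(1+s_1*) for ω < ρ and C_1 − ρ·C_2 for ω ≥ ρ, where C_2 = p_2 log(1+s_2*). -/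
open MeasureTheory

lemma integral_reciprocal_shift (a b : ℝ) (ha : 0 ≤ a) (hab : a ≤ b) :
    ∫ s in a..b, 1 / (1 + s) = Real.log (1 + b) - Real.log (1 + a) := by
  have h1 : (∫ s in a..b, 1 / (1 + s)) = ∫ x in (1+a)..(1+b), 1 / x := by
    simpa using intervalIntegral.integral_comp_add_left (a := a) (b := b)
      (fun x => 1 / x) 1
  have h0 : (0:ℝ) ∉ Set.uIcc (1+a) (1+b) := by
    rw [Set.uIcc_of_le (by linarith)]
    intro h
    simp only [Set.mem_Icc] at h
    linarith
  rw [h1, integral_one_div h0, Real.log_div (by linarith) (by linarith)]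

/-- For the intermittent AWGN broadcast channel with
`P(Sᵢ ≥ s) = pᵢ` for `0 ≤ s ≤ sᵢ*` and `0` for `s > sᵢ*` (with `s₂* ≤ s₁*`, `p₁ ≤ p₂`,
`ρ = p₁/p₂`), the partition set `I₁(ω) = {s ≥ 0 : P(S₁ ≥ s) > ω P(S₂ ≥ s)}` equals
`[0, s₁*]` for `0 ≤ ω < ρ` and `(s₂*, s₁*]` for `ω ≥ ρ`; correspondingly the outer-bound
rate `R₁*(ω) = log e ∫_{I₁(ω)} P(S₁ ≥ s)/(1+s) ds` equals `C₁ = p₁ log₂(1+s₁*)` for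
`ω < ρ` and `C₁ − ρ C₂` for `ω ≥ ρ`, where `C₂ = p₂ log₂(1+s₂*)`. -/
theorem intermittent_awgn_outer_bound
    (p1 p2 s1 s2 : ℝ)
    (hp1 : 0 < p1) (hp12 : p1 ≤ p2) (hp2 : p2 ≤ 1)
    (hs2 : 0 < s2) (hs12 : s2 ≤ s1)
    (ω : ℝ) (hω : 0 ≤ ω)
    (F1 F2 : ℝ → ℝ)
    (hF1 : ∀ s, F1 s = if s ≤ s1 then p1 else 0)
    (hF2 : ∀ s, F2 s = if s ≤ s2 then p2 else 0) :
    ({s : ℝ | 0 ≤ s ∧ ω * F2 s < F1 s}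
        = if ω < p1 / p2 then Set.Icc 0 s1 else Set.Ioc s2 s1) ∧
    Real.logb 2 (Real.exp 1) * ∫ s in {s : ℝ | 0 ≤ s ∧ ω * F2 s < F1 s}, F1 s / (1 + s)
      = if ω < p1 / p2 then p1 * Real.logb 2 (1 + s1)
        else p1 * Real.logb 2 (1 + s1) - (p1 / p2) * (p2 * Real.logb 2 (1 + s2)) := by
  have hp2' : 0 < p2 := lt_of_lt_of_le hp1 hp12
  have hs1 : 0 < s1 := lt_of_lt_of_le hs2 hs12
  have hset : {s : ℝ | 0 ≤ s ∧ ω * F2 s < F1 s}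
      = if ω < p1 / p2 then Set.Icc 0 s1 else Set.Ioc s2 s1 := by
    split_ifs with h
    · ext s
      simp only [Set.mem_setOf_eq, Set.mem_Icc, hF1, hF2]
      constructor
      · rintro ⟨hs, hlt⟩
        refine ⟨hs, ?_⟩
        by_contra hs1'
        rw [if_neg hs1'] at hlt
        have : 0 ≤ ω * (if s ≤ s2 then p2 else 0) := by
          positivity
        linarith
      · rintro ⟨hs, hs1'⟩
        refine ⟨hs, ?_⟩
        rw [if_pos hs1']
        by_cases h2 : s ≤ s2
        · rw [if_pos h2]
          exact (lt_div_iff₀ hp2').mp h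
        · rw [if_neg h2, mul_zero]
          exact hp1
    · push_neg at h
      ext s
      simp only [Set.mem_setOf_eq, Set.mem_Ioc, hF1, hF2]
      constructor
      · rintro ⟨hs, hlt⟩
        have hs1' : s ≤ s1 := by
          by_contra hs1'
          rw [if_neg hs1'] at hlt
          have : 0 ≤ ω * (if s ≤ s2 then p2 else 0) := by positivity
          linarith
        refine ⟨?_, hs1'⟩
        by_contra h2
        push_neg at h2
        rw [if_pos hs1', if_pos h2] at hlt
        have : p1 / p2 ≤ ω := h
        have : p1 ≤ ω * p2 := by
          rw [div_le_iff₀ hp2'] at this; exact this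
        linarith
      · rintro ⟨h2, hs1'⟩
        refine ⟨by linarith, ?_⟩
        rw [if_pos hs1', if_neg (not_le.mpr h2), mul_zero]
        exact hp1
  refine ⟨hset, ?_⟩
  rw [hset]
  have hlogb : ∀ x > (0:ℝ), Real.logb 2 (Real.exp 1) * Real.log x = Real.logb 2 x := by
    intro x hx
    simp [Real.logb, Real.log_exp, div_eq_inv_mul]
  split_ifs with h
  · have hcongr : ∫ s in Set.Icc (0:ℝ) s1, F1 s / (1 + s)
        = ∫ s in Set.Icc (0:ℝ) s1, p1 / (1 + s) := by
      apply setIntegral_congr_fun measurableSet_Icc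
      intro s hs
      simp only [Set.mem_Icc] at hs
      show F1 s / (1 + s) = p1 / (1 + s)
      rw [hF1, if_pos hs.2]
    rw [hcongr, integral_Icc_eq_integral_Ioc,
      ← intervalIntegral.integral_of_le hs1.le]
    have : (∫ s in (0:ℝ)..s1, p1 / (1 + s)) = p1 * Real.log (1 + s1) := by
      have := integral_reciprocal_shift 0 s1 le_rfl hs1.le
      simp only [add_zero, Real.log_one, sub_zero] at this
      calc (∫ s in (0:ℝ)..s1, p1 / (1 + s))
          = ∫ s in (0:ℝ)..s1, p1 * (1 / (1 + s)) := by
            congr 1; ext s; ring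
        _ = p1 * ∫ s in (0:ℝ)..s1, 1 / (1 + s) := intervalIntegral.integral_const_mul _ _
        _ = p1 * Real.log (1 + s1) := by rw [this]
    rw [this]
    linear_combination p1 * hlogb (1 + s1) (by linarith)
  · have hcongr : ∫ s in Set.Ioc s2 s1, F1 s / (1 + s)
        = ∫ s in Set.Ioc s2 s1, p1 / (1 + s) := by
      apply setIntegral_congr_fun measurableSet_Ioc
      intro s hs
      simp only [Set.mem_Ioc] at hs
      show F1 s / (1 + s) = p1 / (1 + s)
      rw [hF1, if_pos hs.2]
    rw [hcongr, ← intervalIntegral.integral_of_le hs12]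
    have : (∫ s in s2..s1, p1 / (1 + s))
        = p1 * (Real.log (1 + s1) - Real.log (1 + s2)) := by
      have := integral_reciprocal_shift s2 s1 hs2.le hs12
      calc (∫ s in s2..s1, p1 / (1 + s))
          = ∫ s in s2..s1, p1 * (1 / (1 + s)) := by
            congr 1; ext s; ring
        _ = p1 * ∫ s in s2..s1, 1 / (1 + s) := intervalIntegral.integral_const_mul _ _
        _ = _ := by rw [this]
    rw [this]
    have e1 := hlogb (1 + s1) (by linarith)
    have e2 := hlogb (1 + s2) (by linarith)
    have hpp : p1 / p2 * p2 = p1 := div_mul_cancel₀ p1 (ne_of_gt hp2')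
    rw [show p1 / p2 * (p2 * Real.logb 2 (1 + s2)) = p1 * Real.logb 2 (1 + s2) by
      rw [← mul_assoc, hpp]]
    linear_combination p1 * e1 - p1 * e2
end
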